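/- Let H, G1, and G2 be t-boundaried X-labeled graphs. Then H is a boundaried labeled minor of G1 ⊕ G2 if and only if there exists a subset P ⊆ pcs(H) such that ⊕_{p∈P} p is a boundaried labeled minor of G1 and ⊕_{p∈pcs(H)\P} p is a boundaried labeled minor of G2. -/

import Mathlib

namespace FDel

open scoped Classical

noncomputable section

/-- A boundaried `X`-labeled graph on the vertex universe `ℕ`: a (finite) vertex set,
a symmetric loopless adjacency relation, a labelset for each vertex, and a partial
assignment of boundary indices to vertices. -/
structure BLG (X : Type) where
  verts : Set ℕ
  Adj : ℕ → ℕ → Prop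
  label : ℕ → Set X
  bnd : ℕ → Option ℕ

variable {X : Type}

/-- Well-formedness of `G` as a `t`-boundaried `X`-labeled graph: the vertex set is finite,
adjacency is symmetric, loopless and supported on the vertex set, labels and boundary
indices live on vertices, the boundary assignment is injective, and indices lie in `{1,…,t}`. -/
def BLG.WF (t : ℕ) (G : BLG X) : Prop :=
  G.verts.Finite ∧
  (∀ u v, G.Adj u v → G.Adj v u) ∧
  (∀ v, ¬ G.Adj v v) ∧
  (∀ u v, G.Adj u v → u ∈ G.verts ∧ v ∈ G.verts) ∧
  (∀ v, v ∉ G.verts → G.label v = ∅ ∧ G.bnd v = none) ∧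
  (∀ u v i, G.bnd u = some i → G.bnd v = some i → u = v) ∧
  (∀ v i, G.bnd v = some i → v ∈ G.verts ∧ 1 ≤ i ∧ i ≤ t)

/-- Reachability inside the vertex set `S`. -/
def ReachIn (G : BLG X) (S : Set ℕ) (a b : ℕ) : Prop :=
  Relation.ReflTransGen (fun u v => G.Adj u v ∧ u ∈ S ∧ v ∈ S) a b

/-- `C` is (the vertex set of) a connected component of the subgraph of `G` induced by `S`. -/
def IsCompOf (G : BLG X) (S C : Set ℕ) : Prop :=
  ∃ v ∈ S, C = {w | w ∈ S ∧ ReachIn G S v w}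

/-- `G` is connected (and nonempty). -/
def BLG.Conn (G : BLG X) : Prop :=
  G.verts.Nonempty ∧ ∀ a ∈ G.verts, ∀ b ∈ G.verts, ReachIn G G.verts a b

/-- Isomorphism of boundaried labeled graphs: a bijection of the vertex sets preserving
adjacency, labelsets and boundary indices. -/
def Iso (G G' : BLG X) : Prop :=
  ∃ f : ℕ → ℕ, Set.BijOn f G.verts G'.verts ∧
    (∀ u ∈ G.verts, ∀ v ∈ G.verts, (G.Adj u v ↔ G'.Adj (f u) (f v))) ∧
    (∀ v ∈ G.verts, G'.label (f v) = G.label v) ∧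
    (∀ v ∈ G.verts, G'.bnd (f v) = G.bnd v)

/-- A boundaried labeled minor model of `H` in `G`. -/
structure MinorModel (H G : BLG X) (φ : ℕ → Set ℕ) : Prop where
  sub : ∀ v ∈ H.verts, φ v ⊆ G.verts
  nonempty : ∀ v ∈ H.verts, (φ v).Nonempty
  conn : ∀ v ∈ H.verts, ∀ a ∈ φ v, ∀ b ∈ φ v, ReachIn G (φ v) a b
  disj : ∀ u ∈ H.verts, ∀ v ∈ H.verts, u ≠ v → Disjoint (φ u) (φ v)
  edge : ∀ u ∈ H.verts, ∀ v ∈ H.verts, H.Adj u v → ∃ a ∈ φ u, ∃ b ∈ φ v, G.Adj a b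
  bnd_none : ∀ v ∈ H.verts, H.bnd v = none → ∀ a ∈ φ v, G.bnd a = none
  bnd_some : ∀ v ∈ H.verts, ∀ i, H.bnd v = some i →
    (∀ a ∈ φ v, G.bnd a = none ∨ G.bnd a = some i) ∧ ∃ a ∈ φ v, G.bnd a = some i
  labels : ∀ v ∈ H.verts, ∀ x, x ∈ H.label v → ∃ a ∈ φ v, x ∈ G.label a

/-- `H` is a boundaried labeled minor of `G`. -/
def Minor (H G : BLG X) : Prop := ∃ φ, MinorModel H G φ

/-- Auxiliary injection for the right summand of `⊕`: a vertex of `G2` that is a boundary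
vertex whose index also occurs in `G1` is identified with the corresponding vertex of `G1`. -/
def rmap (G1 G2 : BLG X) (v : ℕ) : ℕ :=
  if h : ∃ u, u ∈ G1.verts ∧ ∃ i, G2.bnd v = some i ∧ G1.bnd u = some i
  then 2 * Classical.choose h
  else 2 * v + 1

/-- The sum `G1 ⊕ G2`: disjoint union with boundary vertices of equal index identified. -/
def glue (G1 G2 : BLG X) : BLG X where
  verts := (fun v => 2 * v) '' G1.verts ∪ rmap G1 G2 '' G2.verts
  Adj a b :=
    (∃ u ∈ G1.verts, ∃ v ∈ G1.verts, G1.Adj u v ∧ a = 2 * u ∧ b = 2 * v) ∨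
    (∃ u ∈ G2.verts, ∃ v ∈ G2.verts, G2.Adj u v ∧ a = rmap G1 G2 u ∧ b = rmap G1 G2 v)
  label x := {l | (∃ v ∈ G1.verts, x = 2 * v ∧ l ∈ G1.label v) ∨
                  (∃ v ∈ G2.verts, x = rmap G1 G2 v ∧ l ∈ G2.label v)}
  bnd x :=
    if x ∈ (fun v => 2 * v) '' G1.verts ∪ rmap G1 G2 '' G2.verts then
      (if x % 2 = 0 then G1.bnd (x / 2) else G2.bnd (x / 2))
    else none

/-- One-vertex piece on vertex `v`, with boundary index `i` and labelset `L`. -/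
def singlePc (v i : ℕ) (L : Set X) : BLG X :=
  ⟨{v}, fun _ _ => False, fun x => if x = v then L else ∅,
   fun x => if x = v then some i else none⟩

/-- Two-vertex piece consisting of the single edge `{u,v}` with boundary indices `i`, `j`. -/
def edgePc (u v i j : ℕ) : BLG X :=
  ⟨{u, v}, fun a b => (a = u ∧ b = v) ∨ (a = v ∧ b = u), fun _ => ∅,
   fun x => if x = u then some i else if x = v then some j else none⟩

/-- The non-boundary vertices of `G`. -/
def interior (G : BLG X) : Set ℕ := {v | v ∈ G.verts ∧ G.bnd v = none}

/-- The piece of `G` corresponding to a connected component `C` of `G − δ(G)`: `C` together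
with its neighboring boundary vertices, with edges between boundary vertices removed and all
labels removed from boundary vertices. -/
def compPc (G : BLG X) (C : Set ℕ) : BLG X :=
  ⟨C ∪ {v | v ∈ G.verts ∧ G.bnd v ≠ none ∧ ∃ c ∈ C, G.Adj v c},
   fun a b => G.Adj a b ∧
     (a ∈ C ∪ {v | v ∈ G.verts ∧ G.bnd v ≠ none ∧ ∃ c ∈ C, G.Adj v c}) ∧
     (b ∈ C ∪ {v | v ∈ G.verts ∧ G.bnd v ≠ none ∧ ∃ c ∈ C, G.Adj v c}) ∧
     ¬(G.bnd a ≠ none ∧ G.bnd b ≠ none),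
   fun x => if x ∈ C then G.label x else ∅,
   fun x => if x ∈ C ∪ {v | v ∈ G.verts ∧ G.bnd v ≠ none ∧ ∃ c ∈ C, G.Adj v c}
            then G.bnd x else none⟩

/-- The set of pieces of `G`. -/
def pcs (G : BLG X) : Set (BLG X) :=
  {p | ∃ v ∈ G.verts, ∃ i, G.bnd v = some i ∧ p = singlePc v i (∅ : Set X)} ∪
  {p | ∃ v ∈ G.verts, ∃ i, G.bnd v = some i ∧ ∃ l ∈ G.label v, p = singlePc v i {l}} ∪
  {p | ∃ u v i j, G.Adj u v ∧ G.bnd u = some i ∧ G.bnd v = some j ∧ p = edgePc u v i j} ∪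
  {p | ∃ C, IsCompOf G (interior G) C ∧ p = compPc G C}

/-- The sum `⊕_{p ∈ P} p` of a set of pieces of a common graph; since pieces of a common
graph overlap exactly in boundary vertices (with equal indices), the sum is the union. -/
def unionOf (P : Set (BLG X)) : BLG X :=
  ⟨⋃ p ∈ P, p.verts,
   fun a b => ∃ p ∈ P, p.Adj a b,
   fun x => ⋃ p ∈ P, p.label x,
   fun x => if h : ∃ p, p ∈ P ∧ p.bnd x ≠ none then (Classical.choose h).bnd x else none⟩

/-- `mpcs(G)`: all sums of nonempty subsets of the pieces of `G`, up to isomorphism. -/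
def mpcs (G : BLG X) : Set (BLG X) :=
  {H | ∃ P ⊆ pcs G, P.Nonempty ∧ Iso H (unionOf P)}

/-- `mpcs` of a set of graphs. -/
def mpcsSet (S : Set (BLG X)) : Set (BLG X) := ⋃ G ∈ S, mpcs G

/-- Assign boundary index `i` to the vertex `v` of `G`. -/
def assignBnd (G : BLG X) (v i : ℕ) : BLG X :=
  ⟨G.verts, G.Adj, G.label, Function.update G.bnd v (some i)⟩

/-- Split the boundary vertex `u` of `G`: add a new vertex `w` with boundary index `i` and
the edge `{u,w}`, reattach the edges `{u,b}` with `ME b` to `w`, and move the labels `l` of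
`u` with `ML l` to `w`. -/
def splitVx (G : BLG X) (u w i : ℕ) (ME : ℕ → Prop) (ML : X → Prop) : BLG X :=
  ⟨insert w G.verts,
   fun a b =>
     (a = w ∧ b = u) ∨ (a = u ∧ b = w) ∨
     (a = w ∧ b ≠ w ∧ G.Adj u b ∧ ME b) ∨ (b = w ∧ a ≠ w ∧ G.Adj u a ∧ ME a) ∨
     (a ≠ w ∧ b ≠ w ∧ G.Adj a b ∧ ¬(a = u ∧ ME b) ∧ ¬(b = u ∧ ME a)),
   fun x => if x = w then {l | l ∈ G.label u ∧ ML l}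
            else if x = u then {l | l ∈ G.label u ∧ ¬ ML l}
            else G.label x,
   fun x => if x = w then some i else G.bnd x⟩

/-- One extension step turning a `t`-boundaried graph into a `(t+1)`-boundaried one (up to
isomorphism): keep the graph unchanged, assign index `t+1` to a non-boundary vertex, or
split a boundary vertex. -/
def ExtOne (t : ℕ) (H H' : BLG X) : Prop :=
  Iso H' H ∨
  (∃ v ∈ H.verts, H.bnd v = none ∧ Iso H' (assignBnd H v (t + 1))) ∨
  (∃ u ∈ H.verts, ∃ i, H.bnd u = some i ∧ ∃ w, w ∉ H.verts ∧
    ∃ ME : ℕ → Prop, ∃ ML : X → Prop, Iso H' (splitVx H u w (t + 1) ME ML))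

/-- `H' ∈ ext_{+k}(H)` for a `t`-boundaried graph `H`: `k` successive extension steps. -/
def ExtN (t : ℕ) : ℕ → BLG X → BLG X → Prop
  | 0, H, H' => Iso H' H
  | k + 1, H, H' => ∃ H'', ExtN t k H H'' ∧ ExtOne (t + k) H'' H'

/-- `ext_{+k}` of a set of `t`-boundaried graphs. -/
def extSet (t k : ℕ) (S : Set (BLG X)) : Set (BLG X) := {H' | ∃ H ∈ S, ExtN t k H H'}

/-- `mpcs_{+t}(S)` for a set `S` of unboundaried graphs. -/
def mpcsPlus (t : ℕ) (S : Set (BLG X)) : Set (BLG X) := mpcsSet (extSet 0 t S)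

/-- `forget(G,k)`: forget the boundary status of all boundary vertices with index `> k`. -/
def forget (G : BLG X) (k : ℕ) : BLG X :=
  ⟨G.verts, G.Adj, G.label, fun v => (G.bnd v).bind fun i => if i ≤ k then some i else none⟩

/-- Membership in a set of graphs, up to isomorphism. -/
def MemIso (H : BLG X) (S : Set (BLG X)) : Prop := ∃ H' ∈ S, Iso H H'

/-- `G1` and `G2` share no edge: no edge between boundary indices `i,j` occurs in both. -/
def EdgeDisjoint (G1 G2 : BLG X) : Prop :=
  ¬ ∃ i j, (∃ u v, G1.Adj u v ∧ G1.bnd u = some i ∧ G1.bnd v = some j) ∧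
           (∃ u v, G2.Adj u v ∧ G2.bnd u = some i ∧ G2.bnd v = some j)

/-- The merge `Π1 ⊙_F Π2`. -/
def Merge (F : Set (BLG X)) (t : ℕ) (P1 P2 : Set (BLG X)) : Set (BLG X) :=
  {G | G ∈ mpcsPlus t F ∧ ∀ G1 G2 : BLG X, G1.WF t → G2.WF t → EdgeDisjoint G1 G2 →
    Iso (glue G1 G2) G →
    (∃ H ∈ P1, Minor H G1) ∨ (∃ H ∈ P2, Minor H G2)}

/-- `(P1, P2) ∈ split_F(P)`: both contain `P`; for every `G ∈ P` and every subset `Y` of its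
pieces, the sum over `Y` was added to `P1` or the sum over the complement was added to `P2`;
and every member of `P1`/`P2` is accounted for by one of the two addition rules. -/
def SplitMem (F : Set (BLG X)) (t : ℕ) (P P1 P2 : Set (BLG X)) : Prop :=
  P ⊆ P1 ∧ P ⊆ P2 ∧
  (∀ G ∈ P, ∀ Y ⊆ pcs G, MemIso (unionOf Y) P1 ∨ MemIso (unionOf (pcs G \ Y)) P2) ∧
  (∀ H ∈ P1, H ∈ P ∨ (∃ G ∈ P, ∃ Y ⊆ pcs G, Iso H (unionOf Y)) ∨
    (H ∈ mpcsPlus t F ∧ ∃ H', Minor H' H ∧ MemIso H' P1)) ∧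
  (∀ H ∈ P2, H ∈ P ∨ (∃ G ∈ P, ∃ Y ⊆ pcs G, Iso H (unionOf Y)) ∨
    (H ∈ mpcsPlus t F ∧ ∃ H', Minor H' H ∧ MemIso H' P2))

/-- `folio*_{Q,t}(G)`: the boundaried labeled minors of `G` lying in `mpcs_{+t}(Q)`. -/
def folioStar (Q : Set (BLG X)) (t : ℕ) (G : BLG X) : Set (BLG X) :=
  {H | H ∈ mpcsPlus t Q ∧ Minor H G}

/-- The `(t+1)`-boundaried graphs in which boundary index `t+1` is assigned to a vertex. -/
def defBnd (t : ℕ) : Set (BLG X) := {G | ∃ v ∈ G.verts, G.bnd v = some t}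


/-!
Write `K = G1 ⊕ G2`. The argument only uses that `K` is covered by injective images of `G1`
and `G2` which carry all edges and labels of `K` and overlap exactly in boundary vertices of equal
index (`IsGlue`).

Given a minor model `φ` of `H` in `K`, pull each branch set back to `G1` and to `G2`. A branch set
contains at most one boundary vertex of `K`, and a walk can only pass between the two images
through a boundary vertex, so contracting the far side onto that vertex shows that the pulled-back
branch sets are still connected. Branch sets of interior vertices contain no boundary vertex at
all, hence the branch sets of a whole interior component of `H` lie on one side. Consequently every
piece of `H` is modelled, by the pulled-back branch sets, in `G1` or in `G2`; `P` is the set of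
pieces modelled in `G1`, and the models of the pieces glue to models of the two sums.

Conversely, models of `⊕ P` in `G1` and of `⊕ (pcs H ∖ P)` in `G2` are pushed forward to `K` and
united. A vertex of `H` occurring in both halves is a boundary vertex, since an interior vertex
lies in a single piece, and its two branch sets meet in the boundary vertex of `K` of its index.
-/

variable {t : ℕ}

lemma BLG.WF.symm {G : BLG X} (h : G.WF t) {a b : ℕ} (hab : G.Adj a b) : G.Adj b a :=
  h.2.1 a b hab

lemma BLG.WF.adj_mem {G : BLG X} (h : G.WF t) {a b : ℕ} (hab : G.Adj a b) :
    a ∈ G.verts ∧ b ∈ G.verts :=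
  h.2.2.2.1 a b hab

lemma BLG.WF.bnd_inj {G : BLG X} (h : G.WF t) {a b i : ℕ} (ha : G.bnd a = some i)
    (hb : G.bnd b = some i) : a = b :=
  h.2.2.2.2.2.1 a b i ha hb

lemma BLG.WF.mem_of_bnd {G : BLG X} (h : G.WF t) {a i : ℕ} (ha : G.bnd a = some i) :
    a ∈ G.verts :=
  (h.2.2.2.2.2.2 a i ha).1

lemma ReachIn.symm {G : BLG X} (hG : ∀ a b, G.Adj a b → G.Adj b a) {S : Set ℕ} {a b : ℕ}
    (h : ReachIn G S a b) : ReachIn G S b a := by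
  induction h with
  | refl => exact .refl
  | tail _ hstep ih => exact .head ⟨hG _ _ hstep.1, hstep.2.2, hstep.2.1⟩ ih

lemma ReachIn.map {G K : BLG X} {S T : Set ℕ} {f : ℕ → ℕ}
    (hf : ∀ a ∈ S, ∀ b ∈ S, G.Adj a b → K.Adj (f a) (f b)) (hST : Set.MapsTo f S T)
    {a b : ℕ} (h : ReachIn G S a b) : ReachIn K T (f a) (f b) :=
  Relation.ReflTransGen.lift f (fun x y hxy => ⟨hf x hxy.2.1 y hxy.2.2 hxy.1,
    hST hxy.2.1, hST hxy.2.2⟩) _ _ h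

structure IsGlue (K G1 G2 : BLG X) (e1 e2 : ℕ → ℕ) : Prop where
  injOn_left : Set.InjOn e1 G1.verts
  injOn_right : Set.InjOn e2 G2.verts
  verts_eq : K.verts = e1 '' G1.verts ∪ e2 '' G2.verts
  adj_iff : ∀ x y, K.Adj x y ↔
    (∃ a ∈ G1.verts, ∃ b ∈ G1.verts, G1.Adj a b ∧ x = e1 a ∧ y = e1 b) ∨
    (∃ a ∈ G2.verts, ∃ b ∈ G2.verts, G2.Adj a b ∧ x = e2 a ∧ y = e2 b)
  label_iff : ∀ x l, l ∈ K.label x ↔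
    (∃ a ∈ G1.verts, x = e1 a ∧ l ∈ G1.label a) ∨ (∃ a ∈ G2.verts, x = e2 a ∧ l ∈ G2.label a)
  bnd_left : ∀ a ∈ G1.verts, K.bnd (e1 a) = G1.bnd a
  bnd_right : ∀ a ∈ G2.verts, K.bnd (e2 a) = G2.bnd a
  bnd_inj : ∀ x y i, K.bnd x = some i → K.bnd y = some i → x = y
  bnd_ne_none_of_eq : ∀ a ∈ G1.verts, ∀ b ∈ G2.verts, e1 a = e2 b → G1.bnd a ≠ none

section Glue

variable {G1 G2 : BLG X}

lemma rmap_eq_or (G1 G2 : BLG X) (v : ℕ) :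
    (∃ u ∈ G1.verts, ∃ i, G2.bnd v = some i ∧ G1.bnd u = some i ∧ rmap G1 G2 v = 2 * u) ∨
      rmap G1 G2 v = 2 * v + 1 := by
  by_cases h : ∃ u, u ∈ G1.verts ∧ ∃ i, G2.bnd v = some i ∧ G1.bnd u = some i
  · obtain ⟨hu, i, hv, hu'⟩ := Classical.choose_spec h
    exact Or.inl ⟨_, hu, i, hv, hu', dif_pos h⟩
  · exact Or.inr (dif_neg h)

lemma rmap_eq_two_mul (h1 : G1.WF t) {u v i : ℕ} (hv : G2.bnd v = some i)
    (hu : G1.bnd u = some i) : rmap G1 G2 v = 2 * u := by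
  have h : ∃ u, u ∈ G1.verts ∧ ∃ i, G2.bnd v = some i ∧ G1.bnd u = some i :=
    ⟨u, h1.mem_of_bnd hu, i, hv, hu⟩
  obtain ⟨_, i', hv', hu'⟩ := Classical.choose_spec h
  obtain rfl : i' = i := Option.some_injective _ (hv'.symm.trans hv)
  rw [rmap, dif_pos h, h1.bnd_inj hu' hu]

lemma rmap_injective (h2 : G2.WF t) : Function.Injective (rmap G1 G2) := by
  intro v w hvw
  rcases rmap_eq_or G1 G2 v with ⟨u, _, i, hv, hu, hrv⟩ | hrv <;>
    rcases rmap_eq_or G1 G2 w with ⟨u', _, i', hw, hu', hrw⟩ | hrw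
  · obtain rfl : u = u' := by omega
    obtain rfl : i = i' := Option.some_injective _ (hu.symm.trans hu')
    exact h2.bnd_inj hv hw
  all_goals omega

lemma bnd_ne_none_of_two_mul_eq_rmap {a b : ℕ} (h : 2 * a = rmap G1 G2 b) : G1.bnd a ≠ none := by
  rcases rmap_eq_or G1 G2 b with ⟨u, _, i, _, hu, hr⟩ | hr
  · obtain rfl : a = u := by omega
    simp [hu]
  · omega

lemma glue_bnd_two_mul {a : ℕ} (ha : a ∈ G1.verts) : (glue G1 G2).bnd (2 * a) = G1.bnd a := by
  have hmem : 2 * a ∈ (glue G1 G2).verts := Or.inl ⟨a, ha, rfl⟩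
  simp only [glue] at hmem ⊢
  rw [if_pos hmem, if_pos (by omega), Nat.mul_div_cancel_left a two_pos]

lemma glue_bnd_rmap {b : ℕ} (hb : b ∈ G2.verts) :
    (glue G1 G2).bnd (rmap G1 G2 b) = G2.bnd b := by
  have hmem : rmap G1 G2 b ∈ (glue G1 G2).verts := Or.inr ⟨b, hb, rfl⟩
  simp only [glue] at hmem ⊢
  rw [if_pos hmem]
  rcases rmap_eq_or G1 G2 b with ⟨u, _, i, hb', hu, hr⟩ | hr
  · rw [hr, if_pos (by omega), Nat.mul_div_cancel_left u two_pos, hu, hb']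
  · rw [hr, if_neg (by omega)]
    congr 1
    omega

lemma glue_bnd_inj (h1 : G1.WF t) (h2 : G2.WF t) {x y i : ℕ}
    (hx : (glue G1 G2).bnd x = some i) (hy : (glue G1 G2).bnd y = some i) : x = y := by
  have hside : ∀ z, (glue G1 G2).bnd z = some i →
      (∃ a ∈ G1.verts, z = 2 * a ∧ G1.bnd a = some i) ∨
        (∃ b ∈ G2.verts, z = rmap G1 G2 b ∧ G2.bnd b = some i) := by
    intro z hz
    have hmem : z ∈ (glue G1 G2).verts := by
      by_contra hz'
      simp only [glue] at hz hz'
      rw [if_neg hz'] at hz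
      exact absurd hz (by simp)
    rcases hmem with ⟨a, ha, rfl⟩ | ⟨b, hb, rfl⟩
    · exact Or.inl ⟨a, ha, rfl, (glue_bnd_two_mul ha).symm.trans hz⟩
    · exact Or.inr ⟨b, hb, rfl, (glue_bnd_rmap hb).symm.trans hz⟩
  rcases hside x hx with ⟨a, _, rfl, ha⟩ | ⟨b, _, rfl, hb⟩ <;>
    rcases hside y hy with ⟨a', _, rfl, ha'⟩ | ⟨b', _, rfl, hb'⟩
  · rw [h1.bnd_inj ha ha']
  · exact (rmap_eq_two_mul h1 hb' ha).symm
  · exact rmap_eq_two_mul h1 hb ha'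
  · rw [h2.bnd_inj hb hb']

lemma isGlue_glue (h1 : G1.WF t) (h2 : G2.WF t) :
    IsGlue (glue G1 G2) G1 G2 (2 * ·) (rmap G1 G2) where
  injOn_left _ _ _ _ h := by simpa using h
  injOn_right := (rmap_injective h2).injOn
  verts_eq := rfl
  adj_iff _ _ := Iff.rfl
  label_iff _ _ := Iff.rfl
  bnd_left _ ha := glue_bnd_two_mul ha
  bnd_right _ hb := glue_bnd_rmap hb
  bnd_inj _ _ _ hx hy := glue_bnd_inj h1 h2 hx hy
  bnd_ne_none_of_eq _ _ _ _ h := bnd_ne_none_of_two_mul_eq_rmap h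

end Glue

section IsGlue

variable {K G1 G2 : BLG X} {e1 e2 : ℕ → ℕ}

lemma IsGlue.symm (hK : IsGlue K G1 G2 e1 e2) : IsGlue K G2 G1 e2 e1 where
  injOn_left := hK.injOn_right
  injOn_right := hK.injOn_left
  verts_eq := hK.verts_eq.trans (Set.union_comm _ _)
  adj_iff x y := (hK.adj_iff x y).trans or_comm
  label_iff x l := (hK.label_iff x l).trans or_comm
  bnd_left := hK.bnd_right
  bnd_right := hK.bnd_left
  bnd_inj := hK.bnd_inj
  bnd_ne_none_of_eq b hb a ha h := by
    rw [← hK.bnd_right b hb, h, hK.bnd_left a ha]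
    exact hK.bnd_ne_none_of_eq a ha b hb h.symm

lemma IsGlue.mapsTo_left (hK : IsGlue K G1 G2 e1 e2) : Set.MapsTo e1 G1.verts K.verts :=
  fun a ha => hK.verts_eq ▸ Or.inl ⟨a, ha, rfl⟩

lemma IsGlue.adj_left (hK : IsGlue K G1 G2 e1 e2) {a b : ℕ} (ha : a ∈ G1.verts)
    (hb : b ∈ G1.verts) (hab : G1.Adj a b) : K.Adj (e1 a) (e1 b) :=
  (hK.adj_iff _ _).2 (Or.inl ⟨a, ha, b, hb, hab, rfl, rfl⟩)

lemma IsGlue.label_left (hK : IsGlue K G1 G2 e1 e2) {a : ℕ} {l : X} (ha : a ∈ G1.verts)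
    (hl : l ∈ G1.label a) : l ∈ K.label (e1 a) :=
  (hK.label_iff _ _).2 (Or.inl ⟨a, ha, rfl, hl⟩)

lemma IsGlue.adj_cases_left (hK : IsGlue K G1 G2 e1 e2) {x y : ℕ} (h : K.Adj x y) :
    (∃ a ∈ G1.verts, ∃ b ∈ G1.verts, G1.Adj a b ∧ x = e1 a ∧ y = e1 b) ∨
      ∀ a ∈ G1.verts, (e1 a = x ∨ e1 a = y) → K.bnd (e1 a) ≠ none := by
  rcases (hK.adj_iff x y).1 h with h1 | ⟨a', ha', b', hb', -, rfl, rfl⟩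
  · exact Or.inl h1
  · refine Or.inr fun a ha hxy => ?_
    rw [hK.bnd_left a ha]
    rcases hxy with h | h
    · exact hK.bnd_ne_none_of_eq a ha a' ha' h
    · exact hK.bnd_ne_none_of_eq a ha b' hb' h

lemma IsGlue.exists_adj_left (hK : IsGlue K G1 G2 e1 e2) {x y : ℕ} (h : K.Adj x y)
    (hxy : (x ∈ e1 '' G1.verts ∧ K.bnd x = none) ∨ (y ∈ e1 '' G1.verts ∧ K.bnd y = none)) :
    ∃ a ∈ G1.verts, ∃ b ∈ G1.verts, G1.Adj a b ∧ x = e1 a ∧ y = e1 b := by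
  refine (hK.adj_cases_left h).resolve_right fun hoff => ?_
  rcases hxy with ⟨⟨a, ha, rfl⟩, hb⟩ | ⟨⟨a, ha, rfl⟩, hb⟩
  exacts [hoff a ha (Or.inl rfl) hb, hoff a ha (Or.inr rfl) hb]

lemma IsGlue.mem_label_left_of_bnd_eq_none (hK : IsGlue K G1 G2 e1 e2) {a : ℕ} {l : X}
    (ha : a ∈ G1.verts) (hb : K.bnd (e1 a) = none) (hl : l ∈ K.label (e1 a)) :
    l ∈ G1.label a := by
  rcases (hK.label_iff _ _).1 hl with ⟨a', ha', h, hl'⟩ | ⟨b, hb', h, -⟩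
  · rwa [hK.injOn_left ha ha' h]
  · rw [hK.bnd_left a ha] at hb
    exact absurd hb (hK.bnd_ne_none_of_eq a ha b hb' h)

lemma IsGlue.exists_bnd_of_reachIn (hK : IsGlue K G1 G2 e1 e2) {S : Set ℕ} {x y : ℕ}
    (h : ReachIn K S x y) (hx : x ∈ e1 '' G1.verts) (hy : y ∉ e1 '' G1.verts) :
    ∃ a ∈ G1.verts, e1 a ∈ S ∧ K.bnd (e1 a) ≠ none := by
  induction h with
  | refl => exact absurd hx hy
  | @tail z y _ hzy ih =>
    by_cases hz : z ∈ e1 '' G1.verts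
    · obtain ⟨a, ha, rfl⟩ := hz
      refine ⟨a, ha, hzy.2.1, ?_⟩
      rcases hK.adj_cases_left hzy.1 with ⟨-, -, b, hb, -, -, rfl⟩ | hoff
      · exact absurd ⟨b, hb, rfl⟩ hy
      · exact hoff a ha (Or.inl rfl)
    · exact ih hz

lemma IsGlue.reachIn_preimage (hK : IsGlue K G1 G2 e1 e2) {S : Set ℕ}
    (hS : ∀ x ∈ S, ∀ y ∈ S, K.bnd x ≠ none → K.bnd y ≠ none → x = y) {a b : ℕ}
    (ha : a ∈ G1.verts) (hb : b ∈ G1.verts) (h : ReachIn K S (e1 a) (e1 b)) :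
    ReachIn G1 (G1.verts ∩ e1 ⁻¹' S) a b := by
  obtain ⟨c, hc⟩ : ∃ c, ∀ z ∈ S, z ∈ e1 '' G1.verts → K.bnd z ≠ none → z = e1 c := by
    by_cases hT : ∃ c ∈ G1.verts, e1 c ∈ S ∧ K.bnd (e1 c) ≠ none
    · obtain ⟨c, -, hcS, hcb⟩ := hT
      exact ⟨c, fun z hz _ hzb => hS z hz _ hcS hzb hcb⟩
    · exact ⟨a, fun z hz ⟨c, hc, hcz⟩ hzb => (hT ⟨c, hc, hcz ▸ hz, hcz ▸ hzb⟩).elim⟩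
  -- Collapse everything outside the image of `G1` onto the unique boundary vertex of `S`.
  let g z := if z ∈ e1 '' G1.verts then z else e1 c
  have hg : ∀ z ∈ S, (∀ d ∈ G1.verts, e1 d = z → K.bnd (e1 d) ≠ none) → g z = e1 c := by
    intro z hz hzb
    by_cases hzr : z ∈ e1 '' G1.verts
    · obtain ⟨d, hd, rfl⟩ := hzr
      simp only [g, if_pos (Set.mem_image_of_mem e1 hd)]
      exact hc _ hz ⟨d, hd, rfl⟩ (hzb d hd rfl)
    · simp only [g, if_neg hzr]
  let f z := Function.invFunOn e1 G1.verts (g z)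
  have hf : ∀ d ∈ G1.verts, f (e1 d) = d := fun d hd => by
    simp only [f, g, if_pos (Set.mem_image_of_mem e1 hd)]
    exact hK.injOn_left.leftInvOn_invFunOn hd
  have hstep : (fun x y => K.Adj x y ∧ x ∈ S ∧ y ∈ S) ≤
      Function.onFun (Relation.ReflTransGen fun u v => G1.Adj u v ∧
        u ∈ G1.verts ∩ e1 ⁻¹' S ∧ v ∈ G1.verts ∩ e1 ⁻¹' S) f := by
    rintro x y ⟨hxy, hx, hy⟩
    rcases hK.adj_cases_left hxy with ⟨a', ha', b', hb', hab, rfl, rfl⟩ | hoff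
    · simp only [Function.onFun, hf a' ha', hf b' hb']
      exact .single ⟨hab, ⟨ha', hx⟩, ⟨hb', hy⟩⟩
    · simp only [Function.onFun, f, hg x hx (fun d hd h => hoff d hd (Or.inl h)),
        hg y hy (fun d hd h => hoff d hd (Or.inr h))]
      exact .refl
  have := Relation.ReflTransGen.lift' f hstep _ _ h
  rwa [Function.onFun, hf a ha, hf b hb] at this

end IsGlue

structure IsPart (p H : BLG X) : Prop where
  verts_subset : p.verts ⊆ H.verts
  mem_of_adj : ∀ a b, p.Adj a b → a ∈ p.verts ∧ b ∈ p.verts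
  mem_of_label : ∀ x l, l ∈ p.label x → x ∈ p.verts
  bnd_of_mem : ∀ x ∈ p.verts, p.bnd x = H.bnd x
  bnd_of_not_mem : ∀ x ∉ p.verts, p.bnd x = none

section Pieces

variable {H : BLG X}

lemma isPart_singlePc {v i : ℕ} (hv : v ∈ H.verts) (hb : H.bnd v = some i) (L : Set X) :
    IsPart (singlePc v i L) H where
  verts_subset := Set.singleton_subset_iff.2 hv
  mem_of_adj _ _ h := h.elim
  mem_of_label x l hl := by
    by_contra hx
    simp [singlePc, show x ≠ v from hx] at hl
  bnd_of_mem x hx := by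
    obtain rfl : x = v := hx
    simp [singlePc, hb]
  bnd_of_not_mem _ hx := if_neg hx

lemma isPart_edgePc (hH : H.WF t) {u v i j : ℕ} (hu : H.bnd u = some i)
    (hv : H.bnd v = some j) : IsPart (edgePc u v i j) H where
  verts_subset := by
    rintro x (rfl | rfl)
    exacts [hH.mem_of_bnd hu, hH.mem_of_bnd hv]
  mem_of_adj := by
    rintro a b (⟨rfl, rfl⟩ | ⟨rfl, rfl⟩) <;> simp [edgePc]
  mem_of_label _ _ hl := hl.elim
  bnd_of_mem := by
    rintro x (rfl | rfl)
    · simp [edgePc, hu]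
    · by_cases hxu : x = u
      · subst hxu
        simp [edgePc, hu]
      · simp [edgePc, hxu, hv]
  bnd_of_not_mem x hx := by
    simp only [edgePc, Set.mem_insert_iff, Set.mem_singleton_iff, not_or] at hx ⊢
    simp [hx.1, hx.2]

lemma isPart_compPc {C : Set ℕ} (hC : C ⊆ interior H) : IsPart (compPc H C) H where
  verts_subset := by
    rintro x (hx | hx)
    exacts [(hC hx).1, hx.1]
  mem_of_adj _ _ h := ⟨h.2.1, h.2.2.1⟩
  mem_of_label x l hl := by
    by_contra hx
    simp [compPc, show x ∉ C from fun h => hx (Or.inl h)] at hl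
  bnd_of_mem _ hx := if_pos hx
  bnd_of_not_mem _ hx := if_neg hx

lemma isPart_of_mem_pcs (hH : H.WF t) {p : BLG X} (hp : p ∈ pcs H) : IsPart p H := by
  rcases hp with ((⟨v, hv, i, hb, rfl⟩ | ⟨v, hv, i, hb, -, -, rfl⟩) |
    ⟨u, v, i, j, -, hu, hv, rfl⟩) | ⟨C, ⟨v, -, rfl⟩, rfl⟩
  exacts [isPart_singlePc hv hb _, isPart_singlePc hv hb _, isPart_edgePc hH hu hv,
    isPart_compPc fun _ hw => hw.1]

def compOf (H : BLG X) (v : ℕ) : Set ℕ := {w | w ∈ interior H ∧ ReachIn H (interior H) v w}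

lemma mem_compOf {v : ℕ} (hv : v ∈ interior H) : v ∈ compOf H v := ⟨hv, .refl⟩

lemma compPc_compOf_mem_pcs {v : ℕ} (hv : v ∈ interior H) : compPc H (compOf H v) ∈ pcs H :=
  Or.inr ⟨_, ⟨v, hv, rfl⟩, rfl⟩

lemma compOf_eq (hH : H.WF t) {v w : ℕ} (hv : v ∈ compOf H w) : compOf H w = compOf H v := by
  ext x
  exact ⟨fun hx => ⟨hx.1, (hv.2.symm fun _ _ => hH.symm).trans hx.2⟩,
    fun hx => ⟨hx.1, hv.2.trans hx.2⟩⟩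

lemma exists_mem_pcs_of_mem_label {v : ℕ} {l : X} (hv : v ∈ H.verts) (hl : l ∈ H.label v) :
    ∃ p ∈ pcs H, v ∈ p.verts ∧ l ∈ p.label v := by
  cases hb : H.bnd v with
  | none =>
    have hvC := mem_compOf ⟨hv, hb⟩
    exact ⟨_, compPc_compOf_mem_pcs ⟨hv, hb⟩, Or.inl hvC, by simpa [compPc, hvC] using hl⟩
  | some i => exact ⟨singlePc v i {l}, Or.inl (Or.inl (Or.inr ⟨v, hv, i, hb, l, hl, rfl⟩)), rfl,
      by simp [singlePc]⟩

lemma exists_mem_pcs_of_mem {v : ℕ} (hv : v ∈ H.verts) : ∃ p ∈ pcs H, v ∈ p.verts := by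
  cases hb : H.bnd v with
  | none => exact ⟨_, compPc_compOf_mem_pcs ⟨hv, hb⟩, Or.inl (mem_compOf ⟨hv, hb⟩)⟩
  | some i => exact ⟨singlePc v i ∅, Or.inl (Or.inl (Or.inl ⟨v, hv, i, hb, rfl⟩)), rfl⟩

lemma exists_mem_pcs_of_adj (hH : H.WF t) {u v : ℕ} (h : H.Adj u v) :
    ∃ p ∈ pcs H, p.Adj u v := by
  obtain ⟨hu, hv⟩ := hH.adj_mem h
  by_cases hbu : H.bnd u = none
  · have hvC : v ∈ (compPc H (compOf H u)).verts := by
      by_cases hbv : H.bnd v = none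
      · exact Or.inl ⟨⟨hv, hbv⟩, .single ⟨h, ⟨hu, hbu⟩, ⟨hv, hbv⟩⟩⟩
      · exact Or.inr ⟨hv, hbv, u, mem_compOf ⟨hu, hbu⟩, hH.symm h⟩
    exact ⟨_, compPc_compOf_mem_pcs ⟨hu, hbu⟩,
      h, Or.inl (mem_compOf ⟨hu, hbu⟩), hvC, fun hb => hb.1 hbu⟩
  by_cases hbv : H.bnd v = none
  · exact ⟨_, compPc_compOf_mem_pcs ⟨hv, hbv⟩,
      h, Or.inr ⟨hu, hbu, v, mem_compOf ⟨hv, hbv⟩, h⟩, Or.inl (mem_compOf ⟨hv, hbv⟩),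
      fun hb => hb.2 hbv⟩
  obtain ⟨i, hi⟩ := Option.ne_none_iff_exists'.1 hbu
  obtain ⟨j, hj⟩ := Option.ne_none_iff_exists'.1 hbv
  exact ⟨edgePc u v i j, Or.inl (Or.inr ⟨u, v, i, j, h, hi, hj, rfl⟩), Or.inl ⟨rfl, rfl⟩⟩

lemma eq_compPc_of_mem_pcs (hH : H.WF t) {p : BLG X} (hp : p ∈ pcs H) {v : ℕ}
    (hv : v ∈ p.verts) (hb : H.bnd v = none) : p = compPc H (compOf H v) := by
  rcases hp with ((⟨w, -, i, hw, rfl⟩ | ⟨w, -, i, hw, _, -, rfl⟩) |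
    ⟨u, w, i, j, -, hu, hw, rfl⟩) | ⟨C, ⟨w, -, rfl⟩, rfl⟩
  · obtain rfl : v = w := hv
    simp [hw] at hb
  · obtain rfl : v = w := hv
    simp [hw] at hb
  · rcases hv with rfl | rfl <;> simp_all
  · rcases hv with hv | ⟨-, hv, -⟩
    · rw [← compOf_eq hH hv]
      rfl
    · exact absurd hb hv

end Pieces

lemma mem_unionOf_verts {P : Set (BLG X)} {x : ℕ} :
    x ∈ (unionOf P).verts ↔ ∃ p ∈ P, x ∈ p.verts := by
  simp [unionOf]

lemma mem_unionOf_label {P : Set (BLG X)} {x : ℕ} {l : X} :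
    l ∈ (unionOf P).label x ↔ ∃ p ∈ P, l ∈ p.label x := by
  simp [unionOf]

lemma unionOf_bnd {H : BLG X} {P : Set (BLG X)} (hP : ∀ p ∈ P, IsPart p H) {x : ℕ}
    (hx : x ∈ (unionOf P).verts) : (unionOf P).bnd x = H.bnd x := by
  obtain ⟨p, hp, hxp⟩ := mem_unionOf_verts.1 hx
  simp only [unionOf]
  split_ifs with h
  · obtain ⟨hq, hqx⟩ := Classical.choose_spec h
    have hxq : x ∈ (Classical.choose h).verts := by
      by_contra hxq
      exact hqx ((hP _ hq).bnd_of_not_mem x hxq)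
    exact (hP _ hq).bnd_of_mem x hxq
  · simp only [not_exists, not_and, not_not] at h
    rw [← (hP p hp).bnd_of_mem x hxp, h p hp]

lemma minorModel_unionOf {H G : BLG X} {P : Set (BLG X)} {ψ : ℕ → Set ℕ}
    (hP : ∀ p ∈ P, IsPart p H) (hM : ∀ p ∈ P, MinorModel p G ψ)
    (hdisj : ∀ u ∈ H.verts, ∀ v ∈ H.verts, u ≠ v → Disjoint (ψ u) (ψ v)) :
    MinorModel (unionOf P) G ψ := by
  have hpart : ∀ v ∈ (unionOf P).verts, ∃ p ∈ P, v ∈ p.verts ∧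
      (unionOf P).bnd v = p.bnd v := fun v hv => by
    obtain ⟨p, hp, hvp⟩ := mem_unionOf_verts.1 hv
    exact ⟨p, hp, hvp, by rw [unionOf_bnd hP hv, (hP p hp).bnd_of_mem v hvp]⟩
  have hH : ∀ v ∈ (unionOf P).verts, v ∈ H.verts := fun v hv => by
    obtain ⟨p, hp, hvp, -⟩ := hpart v hv
    exact (hP p hp).verts_subset hvp
  refine ⟨fun v hv => ?_, fun v hv => ?_, fun v hv => ?_,
    fun u hu v hv => hdisj u (hH u hu) v (hH v hv), fun u _ v _ ⟨p, hp, huv⟩ => ?_,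
    fun v hv => ?_, fun v hv => ?_, fun v _ l hl => ?_⟩
  · obtain ⟨p, hp, hvp, -⟩ := hpart v hv
    exact (hM p hp).sub v hvp
  · obtain ⟨p, hp, hvp, -⟩ := hpart v hv
    exact (hM p hp).nonempty v hvp
  · obtain ⟨p, hp, hvp, -⟩ := hpart v hv
    exact (hM p hp).conn v hvp
  · obtain ⟨hu, hv⟩ := (hP p hp).mem_of_adj u v huv
    exact (hM p hp).edge u hu v hv huv
  · obtain ⟨p, hp, hvp, hb⟩ := hpart v hv
    exact hb ▸ (hM p hp).bnd_none v hvp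
  · obtain ⟨p, hp, hvp, hb⟩ := hpart v hv
    exact hb ▸ (hM p hp).bnd_some v hvp
  · obtain ⟨p, hp, hlp⟩ := mem_unionOf_label.1 hl
    exact (hM p hp).labels v ((hP p hp).mem_of_label v l hlp) l hlp

lemma MinorModel.bnd_eq_none_or {U G : BLG X} {ψ : ℕ → Set ℕ} (M : MinorModel U G ψ) {v a : ℕ}
    (hv : v ∈ U.verts) (ha : a ∈ ψ v) : G.bnd a = none ∨ G.bnd a = U.bnd v := by
  cases hb : U.bnd v with
  | none => exact Or.inl (M.bnd_none v hv hb a ha)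
  | some i => exact (M.bnd_some v hv i hb).1 a ha

def pullback (G : BLG X) (e : ℕ → ℕ) (φ : ℕ → Set ℕ) (v : ℕ) : Set ℕ := G.verts ∩ e ⁻¹' φ v

section Forward

variable {K G1 G2 H : BLG X} {e1 e2 : ℕ → ℕ} {φ : ℕ → Set ℕ}

lemma MinorModel.eq_of_bnd_ne_none (M : MinorModel H K φ)
    (hK : ∀ x y i, K.bnd x = some i → K.bnd y = some i → x = y) {v : ℕ} (hv : v ∈ H.verts) :
    ∀ x ∈ φ v, ∀ y ∈ φ v, K.bnd x ≠ none → K.bnd y ≠ none → x = y := by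
  intro x hx y hy hxb hyb
  cases hb : H.bnd v with
  | none => exact absurd (M.bnd_none v hv hb x hx) hxb
  | some i =>
    exact hK x y i (((M.bnd_some v hv i hb).1 x hx).resolve_left hxb)
      (((M.bnd_some v hv i hb).1 y hy).resolve_left hyb)

lemma MinorModel.disjoint_pullback (M : MinorModel H K φ) (G : BLG X) (e : ℕ → ℕ) :
    ∀ u ∈ H.verts, ∀ v ∈ H.verts, u ≠ v → Disjoint (pullback G e φ u) (pullback G e φ v) :=
  fun u hu v hv huv => ((M.disj u hu v hv huv).preimage e).mono Set.inter_subset_right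
    Set.inter_subset_right

lemma IsGlue.exists_bnd_mem_pullback (hK : IsGlue K G1 G2 e1 e2) (M : MinorModel H K φ)
    {v i : ℕ} (hv : v ∈ H.verts) (hb : H.bnd v = some i) (hne : (pullback G1 e1 φ v).Nonempty) :
    ∃ a ∈ pullback G1 e1 φ v, G1.bnd a = some i := by
  obtain ⟨a0, ha0⟩ := hne
  obtain ⟨x, hx, hxb⟩ := (M.bnd_some v hv i hb).2
  by_cases hx1 : x ∈ e1 '' G1.verts
  · obtain ⟨a, ha, rfl⟩ := hx1
    exact ⟨a, ⟨ha, hx⟩, hK.bnd_left a ha ▸ hxb⟩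
  · obtain ⟨a, ha, hav, hab⟩ :=
      hK.exists_bnd_of_reachIn (M.conn v hv _ ha0.2 x hx) ⟨a0, ha0.1, rfl⟩ hx1
    refine ⟨a, ⟨ha, hav⟩, ?_⟩
    rw [← hK.bnd_left a ha]
    exact ((M.bnd_some v hv i hb).1 _ hav).resolve_left hab

lemma IsGlue.minorModel_pullback (hK : IsGlue K G1 G2 e1 e2) (M : MinorModel H K φ)
    {q : BLG X} (hq : IsPart q H) (hne : ∀ v ∈ q.verts, (pullback G1 e1 φ v).Nonempty)
    (hedge : ∀ u ∈ q.verts, ∀ v ∈ q.verts, q.Adj u v →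
      ∃ a ∈ pullback G1 e1 φ u, ∃ b ∈ pullback G1 e1 φ v, G1.Adj a b)
    (hlabel : ∀ v ∈ q.verts, ∀ l ∈ q.label v, ∃ a ∈ pullback G1 e1 φ v, l ∈ G1.label a) :
    MinorModel q G1 (pullback G1 e1 φ) where
  sub _ _ := Set.inter_subset_left
  nonempty := hne
  conn v hv a ha b hb := hK.reachIn_preimage
    (M.eq_of_bnd_ne_none hK.bnd_inj (hq.verts_subset hv)) ha.1 hb.1
    (M.conn v (hq.verts_subset hv) _ ha.2 _ hb.2)
  disj u hu v hv := M.disjoint_pullback G1 e1 u (hq.verts_subset hu) v (hq.verts_subset hv)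
  edge := hedge
  bnd_none v hv hb a ha := by
    rw [← hK.bnd_left a ha.1]
    exact M.bnd_none v (hq.verts_subset hv) (hq.bnd_of_mem v hv ▸ hb) _ ha.2
  bnd_some v hv i hb := by
    rw [hq.bnd_of_mem v hv] at hb
    refine ⟨fun a ha => ?_, hK.exists_bnd_mem_pullback M (hq.verts_subset hv) hb (hne v hv)⟩
    rw [← hK.bnd_left a ha.1]
    exact (M.bnd_some v (hq.verts_subset hv) i hb).1 _ ha.2
  labels := hlabel

lemma IsGlue.minorModel_singlePc (hK : IsGlue K G1 G2 e1 e2) (M : MinorModel H K φ)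
    {v i : ℕ} {L : Set X} (hv : v ∈ H.verts) (hb : H.bnd v = some i)
    (hne : (pullback G1 e1 φ v).Nonempty)
    (hL : ∀ l ∈ L, ∃ a ∈ pullback G1 e1 φ v, l ∈ G1.label a) :
    MinorModel (singlePc v i L) G1 (pullback G1 e1 φ) := by
  refine hK.minorModel_pullback M (isPart_singlePc hv hb L) ?_ (fun _ _ _ _ h => h.elim) ?_
  · rintro w rfl
    exact hne
  · rintro w rfl l hl
    exact hL l (by simpa [singlePc] using hl)

lemma IsGlue.minorModel_edgePc (hK : IsGlue K G1 G2 e1 e2)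
    (hG1 : ∀ a b, G1.Adj a b → G1.Adj b a) (hH : H.WF t) (M : MinorModel H K φ)
    {u v i j a b : ℕ} (hu : H.bnd u = some i) (hv : H.bnd v = some j)
    (ha : a ∈ pullback G1 e1 φ u) (hb : b ∈ pullback G1 e1 φ v) (hab : G1.Adj a b) :
    MinorModel (edgePc u v i j) G1 (pullback G1 e1 φ) := by
  refine hK.minorModel_pullback M (isPart_edgePc hH hu hv) ?_ ?_ (fun _ _ _ hl => hl.elim)
  · rintro w (rfl | rfl)
    exacts [⟨a, ha⟩, ⟨b, hb⟩]
  · rintro x - y - (⟨rfl, rfl⟩ | ⟨rfl, rfl⟩)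
    exacts [⟨a, ha, b, hb, hab⟩, ⟨b, hb, a, ha, hG1 a b hab⟩]

lemma IsGlue.subset_image_of_bnd_eq_none (hK : IsGlue K G1 G2 e1 e2) (M : MinorModel H K φ)
    {v : ℕ} (hv : v ∈ H.verts) (hb : H.bnd v = none) (hne : (pullback G1 e1 φ v).Nonempty) :
    φ v ⊆ e1 '' G1.verts := by
  intro y hy
  by_contra hy'
  obtain ⟨a0, ha0⟩ := hne
  obtain ⟨a, -, hav, hab⟩ :=
    hK.exists_bnd_of_reachIn (M.conn v hv _ ha0.2 y hy) ⟨a0, ha0.1, rfl⟩ hy'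
  exact hab (M.bnd_none v hv hb _ hav)

lemma IsGlue.pullback_nonempty_of_reachIn (hK : IsGlue K G1 G2 e1 e2) (M : MinorModel H K φ)
    {v w : ℕ} (hne : (pullback G1 e1 φ v).Nonempty) (hvw : ReachIn H (interior H) v w) :
    (pullback G1 e1 φ w).Nonempty := by
  induction hvw with
  | refl => exact hne
  | @tail c w _ hcw ih =>
    obtain ⟨hcw, hc, hw⟩ := hcw
    obtain ⟨x, hx, y, hy, hxy⟩ := M.edge c hc.1 w hw.1 hcw
    have hxc := hK.subset_image_of_bnd_eq_none M hc.1 hc.2 ih hx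
    obtain ⟨-, -, b, hb, -, -, rfl⟩ :=
      hK.exists_adj_left hxy (Or.inl ⟨hxc, M.bnd_none c hc.1 hc.2 x hx⟩)
    exact ⟨b, hb, hy⟩

lemma IsGlue.minorModel_compPc (hK : IsGlue K G1 G2 e1 e2) (M : MinorModel H K φ)
    {v : ℕ} (hne : (pullback G1 e1 φ v).Nonempty) :
    MinorModel (compPc H (compOf H v)) G1 (pullback G1 e1 φ) := by
  have hinner : ∀ c ∈ compOf H v, ∀ x ∈ φ c, x ∈ e1 '' G1.verts ∧ K.bnd x = none :=
    fun c hc x hx => ⟨hK.subset_image_of_bnd_eq_none M hc.1.1 hc.1.2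
      (hK.pullback_nonempty_of_reachIn M hne hc.2) hx, M.bnd_none c hc.1.1 hc.1.2 x hx⟩
  have hq : IsPart (compPc H (compOf H v)) H := isPart_compPc fun _ hw => hw.1
  refine hK.minorModel_pullback M hq ?_ ?_ ?_
  · rintro w (hw | ⟨hw, -, c, hc, hwc⟩)
    · exact hK.pullback_nonempty_of_reachIn M hne hw.2
    · obtain ⟨x, hx, y, hy, hxy⟩ := M.edge w hw c hc.1.1 hwc
      obtain ⟨a, ha, -, -, -, rfl, -⟩ := hK.exists_adj_left hxy (Or.inr (hinner c hc y hy))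
      exact ⟨a, ha, hx⟩
  · rintro a - b - ⟨hab, ha, hb, hnb⟩
    obtain ⟨x, hx, y, hy, hxy⟩ := M.edge a (hq.verts_subset ha) b (hq.verts_subset hb) hab
    have hin : a ∈ compOf H v ∨ b ∈ compOf H v := by
      rcases ha with ha | ⟨-, hba, -⟩
      · exact Or.inl ha
      rcases hb with hb | ⟨-, hbb, -⟩
      · exact Or.inr hb
      exact absurd ⟨hba, hbb⟩ hnb
    obtain ⟨a', ha', b', hb', hG, rfl, rfl⟩ :=
      hK.exists_adj_left hxy (hin.imp (hinner a · x hx) (hinner b · y hy))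
    exact ⟨a', ⟨ha', hx⟩, b', ⟨hb', hy⟩, hG⟩
  · intro w _ l hl
    by_cases hw : w ∈ compOf H v
    · simp only [compPc, if_pos hw] at hl
      obtain ⟨x, hx, hlx⟩ := M.labels w hw.1.1 l hl
      obtain ⟨⟨a, ha, rfl⟩, hb⟩ := hinner w hw x hx
      exact ⟨a, ⟨ha, hx⟩, hK.mem_label_left_of_bnd_eq_none ha hb hlx⟩
    · simp [compPc, hw] at hl

lemma IsGlue.minorModel_of_mem_pcs (hK : IsGlue K G1 G2 e1 e2)
    (hG1 : ∀ a b, G1.Adj a b → G1.Adj b a) (hG2 : ∀ a b, G2.Adj a b → G2.Adj b a)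
    (hH : H.WF t) (M : MinorModel H K φ) {p : BLG X} (hp : p ∈ pcs H) :
    MinorModel p G1 (pullback G1 e1 φ) ∨ MinorModel p G2 (pullback G2 e2 φ) := by
  have hside : ∀ v ∈ H.verts, ∀ x ∈ φ v,
      (pullback G1 e1 φ v).Nonempty ∨ (pullback G2 e2 φ v).Nonempty := fun v hv x hx => by
    rcases hK.verts_eq ▸ M.sub v hv hx with ⟨a, ha, rfl⟩ | ⟨a, ha, rfl⟩
    exacts [Or.inl ⟨a, ha, hx⟩, Or.inr ⟨a, ha, hx⟩]
  rcases hp with ((⟨v, hv, i, hb, rfl⟩ | ⟨v, hv, i, hb, l, hl, rfl⟩) |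
    ⟨u, v, i, j, huv, hu, hv, rfl⟩) | ⟨C, ⟨v, hv, rfl⟩, rfl⟩
  · obtain ⟨x, hx, -⟩ := (M.bnd_some v hv i hb).2
    exact (hside v hv x hx).imp (hK.minorModel_singlePc M hv hb · fun _ h => h.elim)
      (hK.symm.minorModel_singlePc M hv hb · fun _ h => h.elim)
  · obtain ⟨x, hx, hlx⟩ := M.labels v hv l hl
    rcases (hK.label_iff x l).1 hlx with ⟨a, ha, rfl, hla⟩ | ⟨a, ha, rfl, hla⟩
    · exact Or.inl (hK.minorModel_singlePc M hv hb ⟨a, ha, hx⟩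
        (by rintro _ rfl; exact ⟨a, ⟨ha, hx⟩, hla⟩))
    · exact Or.inr (hK.symm.minorModel_singlePc M hv hb ⟨a, ha, hx⟩
        (by rintro _ rfl; exact ⟨a, ⟨ha, hx⟩, hla⟩))
  · obtain ⟨x, hx, y, hy, hxy⟩ :=
      M.edge u (hH.mem_of_bnd hu) v (hH.mem_of_bnd hv) huv
    rcases (hK.adj_iff x y).1 hxy with ⟨a, ha, b, hb, hab, rfl, rfl⟩ | ⟨a, ha, b, hb, hab, rfl, rfl⟩
    · exact Or.inl (hK.minorModel_edgePc hG1 hH M hu hv ⟨ha, hx⟩ ⟨hb, hy⟩ hab)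
    · exact Or.inr (hK.symm.minorModel_edgePc hG2 hH M hu hv ⟨ha, hx⟩ ⟨hb, hy⟩ hab)
  · obtain ⟨x, hx⟩ := M.nonempty v hv.1
    exact (hside v hv.1 x hx).imp (hK.minorModel_compPc M) (hK.symm.minorModel_compPc M)

theorem IsGlue.exists_split_of_minorModel (hK : IsGlue K G1 G2 e1 e2)
    (hG1 : ∀ a b, G1.Adj a b → G1.Adj b a) (hG2 : ∀ a b, G2.Adj a b → G2.Adj b a)
    (hH : H.WF t) (M : MinorModel H K φ) :
    ∃ P ⊆ pcs H, Minor (unionOf P) G1 ∧ Minor (unionOf (pcs H \ P)) G2 := by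
  refine ⟨{p ∈ pcs H | MinorModel p G1 (pullback G1 e1 φ)}, fun p hp => hp.1,
    ⟨pullback G1 e1 φ, ?_⟩, ⟨pullback G2 e2 φ, ?_⟩⟩
  · exact minorModel_unionOf (fun p hp => isPart_of_mem_pcs hH hp.1) (fun p hp => hp.2)
      (M.disjoint_pullback G1 e1)
  · exact minorModel_unionOf (fun p hp => isPart_of_mem_pcs hH hp.1)
      (fun p hp => (hK.minorModel_of_mem_pcs hG1 hG2 hH M hp.1).resolve_left
        fun h => hp.2 ⟨hp.1, h⟩)
      (M.disjoint_pullback G2 e2)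

end Forward

def glueBranch (e1 e2 : ℕ → ℕ) (U1 U2 : BLG X) (ψ1 ψ2 : ℕ → Set ℕ) (v : ℕ) : Set ℕ :=
  {x | (v ∈ U1.verts ∧ x ∈ e1 '' ψ1 v) ∨ (v ∈ U2.verts ∧ x ∈ e2 '' ψ2 v)}

section Backward

variable {K G1 G2 H U : BLG X} {e1 e2 : ℕ → ℕ} {P : Set (BLG X)} {ψ ψ1 ψ2 : ℕ → Set ℕ}

lemma IsGlue.reachIn_image_left (hK : IsGlue K G1 G2 e1 e2) (M : MinorModel U G1 ψ) {v : ℕ}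
    (hv : v ∈ U.verts) {T : Set ℕ} (hT : e1 '' ψ v ⊆ T) {a b : ℕ} (ha : a ∈ ψ v)
    (hb : b ∈ ψ v) : ReachIn K T (e1 a) (e1 b) :=
  ReachIn.map (fun _ hc _ hd => hK.adj_left (M.sub v hv hc) (M.sub v hv hd))
    (fun c hc => hT ⟨c, hc, rfl⟩) (M.conn v hv a ha b hb)

lemma IsGlue.exists_adj_image_left (hK : IsGlue K G1 G2 e1 e2) (M : MinorModel U G1 ψ)
    {u v : ℕ} (hu : u ∈ U.verts) (hv : v ∈ U.verts) (huv : U.Adj u v) :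
    ∃ x ∈ e1 '' ψ u, ∃ y ∈ e1 '' ψ v, K.Adj x y := by
  obtain ⟨a, ha, b, hb, hab⟩ := M.edge u hu v hv huv
  exact ⟨e1 a, ⟨a, ha, rfl⟩, e1 b, ⟨b, hb, rfl⟩,
    hK.adj_left (M.sub u hu ha) (M.sub v hv hb) hab⟩

lemma IsGlue.exists_label_image_left (hK : IsGlue K G1 G2 e1 e2) (M : MinorModel U G1 ψ)
    {v : ℕ} {l : X} (hv : v ∈ U.verts) (hl : l ∈ U.label v) :
    ∃ x ∈ e1 '' ψ v, l ∈ K.label x := by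
  obtain ⟨a, ha, hla⟩ := M.labels v hv l hl
  exact ⟨e1 a, ⟨a, ha, rfl⟩, hK.label_left (M.sub v hv ha) hla⟩

lemma IsGlue.exists_bnd_image_left (hK : IsGlue K G1 G2 e1 e2) (M : MinorModel U G1 ψ)
    {v i : ℕ} (hv : v ∈ U.verts) (hb : U.bnd v = some i) :
    ∃ x ∈ e1 '' ψ v, K.bnd x = some i := by
  obtain ⟨a, ha, hai⟩ := (M.bnd_some v hv i hb).2
  exact ⟨e1 a, ⟨a, ha, rfl⟩, (hK.bnd_left a (M.sub v hv ha)).trans hai⟩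

lemma IsGlue.bnd_image_left (hK : IsGlue K G1 G2 e1 e2) (M : MinorModel U G1 ψ) {v x : ℕ}
    (hv : v ∈ U.verts) (hx : x ∈ e1 '' ψ v) : K.bnd x = none ∨ K.bnd x = U.bnd v := by
  obtain ⟨a, ha, rfl⟩ := hx
  rw [hK.bnd_left a (M.sub v hv ha)]
  exact M.bnd_eq_none_or hv ha

lemma unionOf_bnd_of_subset_pcs (hH : H.WF t) {Q : Set (BLG X)} (hQ : Q ⊆ pcs H) {v : ℕ}
    (hv : v ∈ (unionOf Q).verts) : (unionOf Q).bnd v = H.bnd v :=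
  unionOf_bnd (fun _ hp => isPart_of_mem_pcs hH (hQ hp)) hv

lemma mem_unionOf_or_mem_unionOf_diff {v : ℕ} (hv : v ∈ H.verts) :
    v ∈ (unionOf P).verts ∨ v ∈ (unionOf (pcs H \ P)).verts := by
  obtain ⟨p, hp, hvp⟩ := exists_mem_pcs_of_mem hv
  by_cases hpP : p ∈ P
  exacts [Or.inl (mem_unionOf_verts.2 ⟨p, hpP, hvp⟩),
    Or.inr (mem_unionOf_verts.2 ⟨p, ⟨hp, hpP⟩, hvp⟩)]

lemma bnd_ne_none_of_mem_both (hH : H.WF t) (hP : P ⊆ pcs H) {v : ℕ}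
    (h1 : v ∈ (unionOf P).verts) (h2 : v ∈ (unionOf (pcs H \ P)).verts) : H.bnd v ≠ none := by
  intro hb
  obtain ⟨p, hp, hvp⟩ := mem_unionOf_verts.1 h1
  obtain ⟨q, hq, hvq⟩ := mem_unionOf_verts.1 h2
  rw [eq_compPc_of_mem_pcs hH (hP hp) hvp hb] at hp
  rw [eq_compPc_of_mem_pcs hH hq.1 hvq hb] at hq
  exact hq.2 hp

lemma IsGlue.exists_eq_of_mem_both (hK : IsGlue K G1 G2 e1 e2) (hH : H.WF t) (hP : P ⊆ pcs H)
    (M1 : MinorModel (unionOf P) G1 ψ1) (M2 : MinorModel (unionOf (pcs H \ P)) G2 ψ2) {v : ℕ}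
    (h1 : v ∈ (unionOf P).verts) (h2 : v ∈ (unionOf (pcs H \ P)).verts) :
    ∃ a ∈ ψ1 v, ∃ b ∈ ψ2 v, e1 a = e2 b := by
  obtain ⟨i, hi⟩ := Option.ne_none_iff_exists'.1 (bnd_ne_none_of_mem_both hH hP h1 h2)
  obtain ⟨_, ⟨a, ha, rfl⟩, hai⟩ :=
    hK.exists_bnd_image_left M1 h1 (by rw [unionOf_bnd_of_subset_pcs hH hP h1, hi])
  obtain ⟨_, ⟨b, hb, rfl⟩, hbi⟩ :=
    hK.symm.exists_bnd_image_left M2 h2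
      (by rw [unionOf_bnd_of_subset_pcs hH Set.sdiff_subset h2, hi])
  exact ⟨a, ha, b, hb, hK.bnd_inj _ _ i hai hbi⟩

lemma IsGlue.eq_of_mem_both (hK : IsGlue K G1 G2 e1 e2) (hH : H.WF t) (hP : P ⊆ pcs H)
    (M1 : MinorModel (unionOf P) G1 ψ1) (M2 : MinorModel (unionOf (pcs H \ P)) G2 ψ2)
    {u v a b : ℕ} (hu : u ∈ (unionOf P).verts) (ha : a ∈ ψ1 u)
    (hv : v ∈ (unionOf (pcs H \ P)).verts) (hb : b ∈ ψ2 v) (hab : e1 a = e2 b) : u = v := by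
  obtain ⟨k, hk⟩ := Option.ne_none_iff_exists'.1
    (hK.bnd_ne_none_of_eq a (M1.sub u hu ha) b (M2.sub v hv hb) hab)
  have hk1 : K.bnd (e1 a) = some k := (hK.bnd_left a (M1.sub u hu ha)).trans hk
  have hk2 : K.bnd (e2 b) = some k := hab ▸ hk1
  refine hH.bnd_inj (i := k) ?_ ?_
  · rw [← unionOf_bnd_of_subset_pcs hH hP hu, ← hk1]
    exact ((hK.bnd_image_left M1 hu ⟨a, ha, rfl⟩).resolve_left (by simp [hk1])).symm
  · rw [← unionOf_bnd_of_subset_pcs hH Set.sdiff_subset hv, ← hk2]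
    exact ((hK.symm.bnd_image_left M2 hv ⟨b, hb, rfl⟩).resolve_left (by simp [hk2])).symm

lemma IsGlue.reachIn_glueBranch (hK : IsGlue K G1 G2 e1 e2) (hH : H.WF t) (hP : P ⊆ pcs H)
    (M1 : MinorModel (unionOf P) G1 ψ1) (M2 : MinorModel (unionOf (pcs H \ P)) G2 ψ2)
    {v x y : ℕ} (hx : x ∈ glueBranch e1 e2 (unionOf P) (unionOf (pcs H \ P)) ψ1 ψ2 v)
    (hy : y ∈ glueBranch e1 e2 (unionOf P) (unionOf (pcs H \ P)) ψ1 ψ2 v) :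
    ReachIn K (glueBranch e1 e2 (unionOf P) (unionOf (pcs H \ P)) ψ1 ψ2 v) x y := by
  rcases hx with ⟨hv, a, ha, rfl⟩ | ⟨hv, a, ha, rfl⟩ <;>
    rcases hy with ⟨hv', b, hb, rfl⟩ | ⟨hv', b, hb, rfl⟩
  · exact hK.reachIn_image_left M1 hv (fun x hx => Or.inl ⟨hv, hx⟩) ha hb
  · obtain ⟨a', ha', b', hb', h⟩ := hK.exists_eq_of_mem_both hH hP M1 M2 hv hv'
    exact (hK.reachIn_image_left M1 hv (fun x hx => Or.inl ⟨hv, hx⟩) ha ha').trans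
      (h ▸ hK.symm.reachIn_image_left M2 hv' (fun x hx => Or.inr ⟨hv', hx⟩) hb' hb)
  · obtain ⟨a', ha', b', hb', h⟩ := hK.exists_eq_of_mem_both hH hP M1 M2 hv' hv
    exact (hK.symm.reachIn_image_left M2 hv (fun x hx => Or.inr ⟨hv, hx⟩) ha hb').trans
      (h ▸ hK.reachIn_image_left M1 hv' (fun x hx => Or.inl ⟨hv', hx⟩) ha' hb)
  · exact hK.symm.reachIn_image_left M2 hv (fun x hx => Or.inr ⟨hv, hx⟩) ha hb

lemma IsGlue.disjoint_glueBranch (hK : IsGlue K G1 G2 e1 e2) (hH : H.WF t) (hP : P ⊆ pcs H)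
    (M1 : MinorModel (unionOf P) G1 ψ1) (M2 : MinorModel (unionOf (pcs H \ P)) G2 ψ2)
    {u v : ℕ} (huv : u ≠ v) :
    Disjoint (glueBranch e1 e2 (unionOf P) (unionOf (pcs H \ P)) ψ1 ψ2 u)
      (glueBranch e1 e2 (unionOf P) (unionOf (pcs H \ P)) ψ1 ψ2 v) := by
  refine Set.disjoint_left.2 ?_
  rintro x (⟨hu, a, ha, rfl⟩ | ⟨hu, a, ha, rfl⟩) (⟨hv, b, hb, hab⟩ | ⟨hv, b, hb, hab⟩)
  · obtain rfl := hK.injOn_left (M1.sub v hv hb) (M1.sub u hu ha) hab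
    exact Set.disjoint_left.1 (M1.disj u hu v hv huv) ha hb
  · exact huv (hK.eq_of_mem_both hH hP M1 M2 hu ha hv hb hab.symm)
  · exact huv (hK.eq_of_mem_both hH hP M1 M2 hv hb hu ha hab).symm
  · obtain rfl := hK.injOn_right (M2.sub v hv hb) (M2.sub u hu ha) hab
    exact Set.disjoint_left.1 (M2.disj u hu v hv huv) ha hb

lemma IsGlue.exists_adj_glueBranch (hK : IsGlue K G1 G2 e1 e2) (hH : H.WF t)
    (M1 : MinorModel (unionOf P) G1 ψ1) (M2 : MinorModel (unionOf (pcs H \ P)) G2 ψ2)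
    {u v : ℕ} (huv : H.Adj u v) :
    ∃ x ∈ glueBranch e1 e2 (unionOf P) (unionOf (pcs H \ P)) ψ1 ψ2 u,
      ∃ y ∈ glueBranch e1 e2 (unionOf P) (unionOf (pcs H \ P)) ψ1 ψ2 v, K.Adj x y := by
  obtain ⟨p, hp, hpuv⟩ := exists_mem_pcs_of_adj hH huv
  obtain ⟨hup, hvp⟩ := (isPart_of_mem_pcs hH hp).mem_of_adj u v hpuv
  by_cases hpP : p ∈ P
  · have hu : u ∈ (unionOf P).verts := mem_unionOf_verts.2 ⟨p, hpP, hup⟩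
    have hv : v ∈ (unionOf P).verts := mem_unionOf_verts.2 ⟨p, hpP, hvp⟩
    obtain ⟨x, hx, y, hy, hxy⟩ := hK.exists_adj_image_left M1 hu hv ⟨p, hpP, hpuv⟩
    exact ⟨x, Or.inl ⟨hu, hx⟩, y, Or.inl ⟨hv, hy⟩, hxy⟩
  · have hu : u ∈ (unionOf (pcs H \ P)).verts := mem_unionOf_verts.2 ⟨p, ⟨hp, hpP⟩, hup⟩
    have hv : v ∈ (unionOf (pcs H \ P)).verts := mem_unionOf_verts.2 ⟨p, ⟨hp, hpP⟩, hvp⟩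
    obtain ⟨x, hx, y, hy, hxy⟩ := hK.symm.exists_adj_image_left M2 hu hv ⟨p, ⟨hp, hpP⟩, hpuv⟩
    exact ⟨x, Or.inr ⟨hu, hx⟩, y, Or.inr ⟨hv, hy⟩, hxy⟩

lemma IsGlue.exists_label_glueBranch (hK : IsGlue K G1 G2 e1 e2)
    (M1 : MinorModel (unionOf P) G1 ψ1) (M2 : MinorModel (unionOf (pcs H \ P)) G2 ψ2)
    {v : ℕ} {l : X} (hv : v ∈ H.verts) (hl : l ∈ H.label v) :
    ∃ x ∈ glueBranch e1 e2 (unionOf P) (unionOf (pcs H \ P)) ψ1 ψ2 v, l ∈ K.label x := by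
  obtain ⟨p, hp, hvp, hlp⟩ := exists_mem_pcs_of_mem_label hv hl
  by_cases hpP : p ∈ P
  · have hv : v ∈ (unionOf P).verts := mem_unionOf_verts.2 ⟨p, hpP, hvp⟩
    obtain ⟨x, hx, hlx⟩ := hK.exists_label_image_left M1 hv (mem_unionOf_label.2 ⟨p, hpP, hlp⟩)
    exact ⟨x, Or.inl ⟨hv, hx⟩, hlx⟩
  · have hv : v ∈ (unionOf (pcs H \ P)).verts := mem_unionOf_verts.2 ⟨p, ⟨hp, hpP⟩, hvp⟩
    obtain ⟨x, hx, hlx⟩ :=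
      hK.symm.exists_label_image_left M2 hv (mem_unionOf_label.2 ⟨p, ⟨hp, hpP⟩, hlp⟩)
    exact ⟨x, Or.inr ⟨hv, hx⟩, hlx⟩

lemma IsGlue.minorModel_glueBranch (hK : IsGlue K G1 G2 e1 e2) (hH : H.WF t) (hP : P ⊆ pcs H)
    (M1 : MinorModel (unionOf P) G1 ψ1) (M2 : MinorModel (unionOf (pcs H \ P)) G2 ψ2) :
    MinorModel H K (glueBranch e1 e2 (unionOf P) (unionOf (pcs H \ P)) ψ1 ψ2) := by
  have hU1 {v} (hv : v ∈ (unionOf P).verts) := unionOf_bnd_of_subset_pcs hH hP hv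
  have hU2 {v} (hv : v ∈ (unionOf (pcs H \ P)).verts) :=
    unionOf_bnd_of_subset_pcs hH Set.sdiff_subset hv
  have hbnd : ∀ v, ∀ x ∈ glueBranch e1 e2 (unionOf P) (unionOf (pcs H \ P)) ψ1 ψ2 v,
      K.bnd x = none ∨ K.bnd x = H.bnd v := by
    rintro v x (⟨hv, hx⟩ | ⟨hv, hx⟩)
    · exact hU1 hv ▸ hK.bnd_image_left M1 hv hx
    · exact hU2 hv ▸ hK.symm.bnd_image_left M2 hv hx
  refine ⟨?sub, ?nonempty, fun v _ x hx y hy => hK.reachIn_glueBranch hH hP M1 M2 hx hy,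
    fun u _ v _ huv => hK.disjoint_glueBranch hH hP M1 M2 huv,
    fun u _ v _ huv => hK.exists_adj_glueBranch hH M1 M2 huv,
    fun v _ hb x hx => by simpa [hb] using hbnd v x hx,
    fun v hv i hb => ⟨fun x hx => hb ▸ hbnd v x hx, ?bnd_some⟩,
    fun v hv l hl => hK.exists_label_glueBranch M1 M2 hv hl⟩
  case sub =>
    rintro v - x (⟨hv, a, ha, rfl⟩ | ⟨hv, a, ha, rfl⟩)
    exacts [hK.mapsTo_left (M1.sub v hv ha), hK.symm.mapsTo_left (M2.sub v hv ha)]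
  case nonempty =>
    intro v hv
    rcases mem_unionOf_or_mem_unionOf_diff (P := P) hv with hv | hv
    · obtain ⟨a, ha⟩ := M1.nonempty v hv
      exact ⟨e1 a, Or.inl ⟨hv, a, ha, rfl⟩⟩
    · obtain ⟨a, ha⟩ := M2.nonempty v hv
      exact ⟨e2 a, Or.inr ⟨hv, a, ha, rfl⟩⟩
  case bnd_some =>
    rcases mem_unionOf_or_mem_unionOf_diff (P := P) hv with hv | hv
    · obtain ⟨x, hx, hxi⟩ := hK.exists_bnd_image_left M1 hv (by rw [hU1 hv, hb])
      exact ⟨x, Or.inl ⟨hv, hx⟩, hxi⟩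
    · obtain ⟨x, hx, hxi⟩ := hK.symm.exists_bnd_image_left M2 hv (by rw [hU2 hv, hb])
      exact ⟨x, Or.inr ⟨hv, hx⟩, hxi⟩

end Backward

/-- For `t`-boundaried `X`-labeled graphs `H`, `G1`, `G2`: `H` is a
boundaried labeled minor of `G1 ⊕ G2` iff there is `P ⊆ pcs(H)` with `⊕_{p∈P} p` a
boundaried labeled minor of `G1` and `⊕_{p∈pcs(H)∖P} p` a boundaried labeled minor of `G2`. -/
theorem stmt9 {X : Type} (t : ℕ) (H G1 G2 : BLG X)
    (hH : H.WF t) (h1 : G1.WF t) (h2 : G2.WF t) :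
    Minor H (glue G1 G2) ↔
      ∃ P ⊆ pcs H, Minor (unionOf P) G1 ∧ Minor (unionOf (pcs H \ P)) G2 := by
  have hK := isGlue_glue h1 h2
  constructor
  · rintro ⟨φ, M⟩
    exact hK.exists_split_of_minorModel (fun _ _ => h1.symm) (fun _ _ => h2.symm) hH M
  · rintro ⟨P, hP, ⟨ψ1, M1⟩, ⟨ψ2, M2⟩⟩
    exact ⟨_, hK.minorModel_glueBranch hH hP M1 M2⟩

end

end FDel
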